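/- For the 1D function u above, the second derivative p*(x) = u''(x) equals -48(2x+1)(6x+5) on (-1,-1/2), 0 on [-1/2,1/2], and -48(2x-1)(6x-5) on (1/2,1); p* is continuous on (-1,1), but its (distributional) derivative has jump discontinuities at x = ±1/2, so p* does not belong to H²(-1,1) (equivalently (p*)'' ∉ L²(-1,1)). -/

import Mathlib

/-!
All three functions `u`, `u'` and `p*` are glued from polynomial pieces on `(-∞, -1/2)`,
`[-1/2, 1/2]` and `(1/2, ∞)`. Gluing pieces whose values and derivatives agree at the junctions
gives a differentiable function whose derivative is glued from the derivatives of the pieces; this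
yields `u'` and then `u'' = p*`. The pieces of `p*` still agree in value, but their slopes do not
(`-192` against `0` at `-1/2`, `0` against `192` at `1/2`), so `p*` is continuous with a kink at
`±1/2`. A derivative of `(p*)'` at `-1/2` would make `(p*)'` continuous there, contradicting its
jump, so no `(p*)''` exists on `(-1, 1)`, square integrable or not.
-/

open Set

/-- The explicit solution of the 1D biharmonic obstacle problem on (-1,1)
with f ≡ -1152 and obstacle φ ≡ -1. -/
noncomputable def uExact (x : ℝ) : ℝ :=
  if x < -(1/2) then -8*(x+1)^2*(6*x^2+4*x+1)
  else if x ≤ 1/2 then -1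
  else -8*(x-1)^2*(6*x^2-4*x+1)

/-- The exact flux `p* = u''`, given by the explicit piecewise formula. -/
noncomputable def pStar (x : ℝ) : ℝ :=
  if x < -(1/2) then -48*(2*x+1)*(6*x+5)
  else if x ≤ 1/2 then 0
  else -48*(2*x-1)*(6*x-5)

open Filter Topology

theorem hasDerivAt_of_eq_quartic {f f' : ℝ → ℝ} (a b c d e : ℝ)
    (hf : ∀ y, f y = a * y ^ 4 + b * y ^ 3 + c * y ^ 2 + d * y + e)
    (hf' : ∀ y, f' y = 4 * a * y ^ 3 + 3 * b * y ^ 2 + 2 * c * y + d) (x : ℝ) :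
    HasDerivAt f (f' x) x := by
  obtain rfl : f = _ := funext hf
  rw [hf']
  exact (((((hasDerivAt_pow 4 x).const_mul a).add ((hasDerivAt_pow 3 x).const_mul b)).add
    ((hasDerivAt_pow 2 x).const_mul c)).add ((hasDerivAt_id x).const_mul d)).add_const e
    |>.congr_deriv (by norm_num; ring)

theorem tendsto_deriv_of_eventually_hasDerivAt {𝕜 F : Type*} [NontriviallyNormedField 𝕜]
    [NormedAddCommGroup F] [NormedSpace 𝕜 F] {f f' : 𝕜 → F} {l : Filter 𝕜} {L : F}
    (hf : ∀ᶠ x in l, HasDerivAt f (f' x) x) (hf' : Tendsto f' l (𝓝 L)) :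
    Tendsto (deriv f) l (𝓝 L) :=
  hf'.congr' (hf.mono fun _ hx => hx.deriv.symm)

theorem hasDerivAt_of_hasDerivWithinAt_Iic_Ici {f : ℝ → ℝ} {f' x : ℝ}
    (hl : HasDerivWithinAt f f' (Iic x) x) (hr : HasDerivWithinAt f f' (Ici x) x) :
    HasDerivAt f f' x := by
  simpa only [Iic_union_Ici, hasDerivWithinAt_univ] using hl.union hr

theorem not_differentiableAt_of_hasDerivWithinAt_Iic_Ici {f : ℝ → ℝ} {l r x : ℝ}
    (hl : HasDerivWithinAt f l (Iic x) x) (hr : HasDerivWithinAt f r (Ici x) x) (hlr : l ≠ r) :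
    ¬ DifferentiableAt ℝ f x := fun hf =>
  hlr <| ((uniqueDiffWithinAt_Iic x).eq_deriv _ hl hf.hasDerivAt.hasDerivWithinAt).trans
    ((uniqueDiffWithinAt_Ici x).eq_deriv _ hf.hasDerivAt.hasDerivWithinAt hr)

theorem not_continuousAt_of_tendsto_nhdsLT_nhdsGT {f : ℝ → ℝ} {l r x : ℝ}
    (hl : Tendsto f (𝓝[<] x) (𝓝 l)) (hr : Tendsto f (𝓝[>] x) (𝓝 r)) (hlr : l ≠ r) :
    ¬ ContinuousAt f x := fun hf =>
  hlr <| (tendsto_nhds_unique hl (hf.tendsto.mono_left nhdsWithin_le_nhds)).trans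
    (tendsto_nhds_unique (hf.tendsto.mono_left nhdsWithin_le_nhds) hr)

noncomputable def piecewiseIcc (a b : ℝ) (g h k : ℝ → ℝ) (x : ℝ) : ℝ :=
  if x < a then g x else if x ≤ b then h x else k x

section piecewiseIcc

variable {a b : ℝ} {g h k : ℝ → ℝ}

theorem piecewiseIcc_eqOn_Iio : EqOn (piecewiseIcc a b g h k) g (Iio a) :=
  fun _ hx => if_pos hx

theorem piecewiseIcc_eqOn_Icc : EqOn (piecewiseIcc a b g h k) h (Icc a b) :=
  fun _ hx => by rw [piecewiseIcc, if_neg (not_lt.2 hx.1), if_pos hx.2]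

theorem piecewiseIcc_eqOn_Ioi (hab : a ≤ b) : EqOn (piecewiseIcc a b g h k) k (Ioi b) :=
  fun _ hx => by
    rw [piecewiseIcc, if_neg (not_lt.2 (hab.trans (mem_Ioi.1 hx).le)), if_neg (not_le.2 hx)]

theorem piecewiseIcc_eqOn_Iic (hab : a ≤ b) (ha : g a = h a) :
    EqOn (piecewiseIcc a b g h k) g (Iic a) := fun x hx => by
  rcases (mem_Iic.1 hx).lt_or_eq with hx | rfl
  · exact piecewiseIcc_eqOn_Iio hx
  · exact (piecewiseIcc_eqOn_Icc ⟨le_rfl, hab⟩).trans ha.symm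

theorem piecewiseIcc_eqOn_Ici (hab : a ≤ b) (hb : h b = k b) :
    EqOn (piecewiseIcc a b g h k) k (Ici b) := fun x hx => by
  rcases (mem_Ici.1 hx).lt_or_eq with hx | rfl
  · exact piecewiseIcc_eqOn_Ioi hab hx
  · exact (piecewiseIcc_eqOn_Icc ⟨hab, le_rfl⟩).trans hb

theorem continuous_piecewiseIcc (hab : a ≤ b) (hg : Continuous g) (hh : Continuous h)
    (hk : Continuous k) (ha : g a = h a) (hb : h b = k b) :
    Continuous (piecewiseIcc a b g h k) := by
  rw [← continuousOn_univ, ← Iic_union_Ici (a := a), ← Icc_union_Ici_eq_Ici hab]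
  exact (hg.continuousOn.congr (piecewiseIcc_eqOn_Iic hab ha)).union_of_isClosed
    ((hh.continuousOn.congr piecewiseIcc_eqOn_Icc).union_of_isClosed
      (hk.continuousOn.congr (piecewiseIcc_eqOn_Ici hab hb)) isClosed_Icc isClosed_Ici)
    isClosed_Iic (isClosed_Icc.union isClosed_Ici)

section Deriv

variable {x g' h' k' : ℝ}

theorem hasDerivAt_piecewiseIcc_of_lt (hx : x < a) (hg : HasDerivAt g g' x) :
    HasDerivAt (piecewiseIcc a b g h k) g' x :=
  hg.congr_of_eventuallyEq (piecewiseIcc_eqOn_Iio.eventuallyEq_of_mem (Iio_mem_nhds hx))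

theorem hasDerivAt_piecewiseIcc_of_mem_Ioo (hx : x ∈ Ioo a b) (hh : HasDerivAt h h' x) :
    HasDerivAt (piecewiseIcc a b g h k) h' x :=
  hh.congr_of_eventuallyEq <| (piecewiseIcc_eqOn_Icc.mono Ioo_subset_Icc_self).eventuallyEq_of_mem
    (Ioo_mem_nhds hx.1 hx.2)

theorem hasDerivAt_piecewiseIcc_of_gt (hab : a ≤ b) (hx : b < x) (hk : HasDerivAt k k' x) :
    HasDerivAt (piecewiseIcc a b g h k) k' x :=
  hk.congr_of_eventuallyEq ((piecewiseIcc_eqOn_Ioi hab).eventuallyEq_of_mem (Ioi_mem_nhds hx))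

theorem hasDerivWithinAt_piecewiseIcc_Iic_left (hab : a ≤ b) (ha : g a = h a)
    (hg : HasDerivAt g g' a) : HasDerivWithinAt (piecewiseIcc a b g h k) g' (Iic a) a :=
  hg.hasDerivWithinAt.congr_of_mem (piecewiseIcc_eqOn_Iic hab ha) self_mem_Iic

theorem hasDerivWithinAt_piecewiseIcc_Ici_left (hab : a < b) (hh : HasDerivAt h h' a) :
    HasDerivWithinAt (piecewiseIcc a b g h k) h' (Ici a) a :=
  (hh.hasDerivWithinAt.congr_of_mem piecewiseIcc_eqOn_Icc (left_mem_Icc.2 hab.le))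
    |>.mono_of_mem_nhdsWithin (Icc_mem_nhdsGE hab)

theorem hasDerivWithinAt_piecewiseIcc_Iic_right (hab : a < b) (hh : HasDerivAt h h' b) :
    HasDerivWithinAt (piecewiseIcc a b g h k) h' (Iic b) b :=
  (hh.hasDerivWithinAt.congr_of_mem piecewiseIcc_eqOn_Icc (right_mem_Icc.2 hab.le))
    |>.mono_of_mem_nhdsWithin (Icc_mem_nhdsLE hab)

theorem hasDerivWithinAt_piecewiseIcc_Ici_right (hab : a ≤ b) (hb : h b = k b)
    (hk : HasDerivAt k k' b) : HasDerivWithinAt (piecewiseIcc a b g h k) k' (Ici b) b :=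
  hk.hasDerivWithinAt.congr_of_mem (piecewiseIcc_eqOn_Ici hab hb) self_mem_Ici

theorem not_differentiableAt_piecewiseIcc_left (hab : a < b) (ha : g a = h a)
    (hg : HasDerivAt g g' a) (hh : HasDerivAt h h' a) (hne : g' ≠ h') :
    ¬ DifferentiableAt ℝ (piecewiseIcc a b g h k) a :=
  not_differentiableAt_of_hasDerivWithinAt_Iic_Ici
    (hasDerivWithinAt_piecewiseIcc_Iic_left hab.le ha hg)
    (hasDerivWithinAt_piecewiseIcc_Ici_left hab hh) hne

theorem not_differentiableAt_piecewiseIcc_right (hab : a < b) (hb : h b = k b)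
    (hh : HasDerivAt h h' b) (hk : HasDerivAt k k' b) (hne : h' ≠ k') :
    ¬ DifferentiableAt ℝ (piecewiseIcc a b g h k) b :=
  not_differentiableAt_of_hasDerivWithinAt_Iic_Ici
    (hasDerivWithinAt_piecewiseIcc_Iic_right hab hh)
    (hasDerivWithinAt_piecewiseIcc_Ici_right hab.le hb hk) hne

end Deriv

section DerivFun

variable {g' h' k' : ℝ → ℝ}

theorem hasDerivAt_piecewiseIcc (hab : a < b) (hg : ∀ x, HasDerivAt g (g' x) x)
    (hh : ∀ x, HasDerivAt h (h' x) x) (hk : ∀ x, HasDerivAt k (k' x) x)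
    (ha : g a = h a) (ha' : g' a = h' a) (hb : h b = k b) (hb' : h' b = k' b) (x : ℝ) :
    HasDerivAt (piecewiseIcc a b g h k) (piecewiseIcc a b g' h' k' x) x := by
  rcases lt_trichotomy x a with hxa | rfl | hxa
  · rw [piecewiseIcc_eqOn_Iio hxa]
    exact hasDerivAt_piecewiseIcc_of_lt hxa (hg x)
  · rw [piecewiseIcc_eqOn_Icc (left_mem_Icc.2 hab.le)]
    exact hasDerivAt_of_hasDerivWithinAt_Iic_Ici
      (ha' ▸ hasDerivWithinAt_piecewiseIcc_Iic_left hab.le ha (hg x))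
      (hasDerivWithinAt_piecewiseIcc_Ici_left hab (hh x))
  rcases lt_trichotomy x b with hxb | rfl | hxb
  · rw [piecewiseIcc_eqOn_Icc ⟨hxa.le, hxb.le⟩]
    exact hasDerivAt_piecewiseIcc_of_mem_Ioo ⟨hxa, hxb⟩ (hh x)
  · rw [piecewiseIcc_eqOn_Icc (right_mem_Icc.2 hab.le)]
    exact hasDerivAt_of_hasDerivWithinAt_Iic_Ici
      (hasDerivWithinAt_piecewiseIcc_Iic_right hab (hh x))
      (hb' ▸ hasDerivWithinAt_piecewiseIcc_Ici_right hab.le hb (hk x))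
  · rw [piecewiseIcc_eqOn_Ioi hab.le hxb]
    exact hasDerivAt_piecewiseIcc_of_gt hab.le hxb (hk x)

theorem tendsto_deriv_piecewiseIcc_nhdsLT_left {L : ℝ} (hg : ∀ x, HasDerivAt g (g' x) x)
    (hg' : ContinuousAt g' a) (hL : g' a = L) :
    Tendsto (deriv (piecewiseIcc a b g h k)) (𝓝[<] a) (𝓝 L) :=
  tendsto_deriv_of_eventually_hasDerivAt
    (eventually_nhdsWithin_of_forall fun x hx => hasDerivAt_piecewiseIcc_of_lt hx (hg x))
    (hL ▸ hg'.tendsto.mono_left nhdsWithin_le_nhds)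

theorem tendsto_deriv_piecewiseIcc_nhdsGT_left {L : ℝ} (hab : a < b)
    (hh : ∀ x, HasDerivAt h (h' x) x) (hh' : ContinuousAt h' a) (hL : h' a = L) :
    Tendsto (deriv (piecewiseIcc a b g h k)) (𝓝[>] a) (𝓝 L) :=
  tendsto_deriv_of_eventually_hasDerivAt
    (eventually_of_mem (Ioo_mem_nhdsGT hab) fun x hx =>
      hasDerivAt_piecewiseIcc_of_mem_Ioo hx (hh x))
    (hL ▸ hh'.tendsto.mono_left nhdsWithin_le_nhds)

theorem tendsto_deriv_piecewiseIcc_nhdsLT_right {L : ℝ} (hab : a < b)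
    (hh : ∀ x, HasDerivAt h (h' x) x) (hh' : ContinuousAt h' b) (hL : h' b = L) :
    Tendsto (deriv (piecewiseIcc a b g h k)) (𝓝[<] b) (𝓝 L) :=
  tendsto_deriv_of_eventually_hasDerivAt
    (eventually_of_mem (Ioo_mem_nhdsLT hab) fun x hx =>
      hasDerivAt_piecewiseIcc_of_mem_Ioo hx (hh x))
    (hL ▸ hh'.tendsto.mono_left nhdsWithin_le_nhds)

theorem tendsto_deriv_piecewiseIcc_nhdsGT_right {L : ℝ} (hab : a ≤ b)
    (hk : ∀ x, HasDerivAt k (k' x) x) (hk' : ContinuousAt k' b) (hL : k' b = L) :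
    Tendsto (deriv (piecewiseIcc a b g h k)) (𝓝[>] b) (𝓝 L) :=
  tendsto_deriv_of_eventually_hasDerivAt
    (eventually_nhdsWithin_of_forall fun x hx => hasDerivAt_piecewiseIcc_of_gt hab hx (hk x))
    (hL ▸ hk'.tendsto.mono_left nhdsWithin_le_nhds)

end DerivFun

end piecewiseIcc

theorem uExact_eq_piecewiseIcc : uExact = piecewiseIcc (-(1/2)) (1/2)
    (fun x => -8*(x+1)^2*(6*x^2+4*x+1)) (fun _ => -1) (fun x => -8*(x-1)^2*(6*x^2-4*x+1)) :=
  rfl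

theorem pStar_eq_piecewiseIcc : pStar = piecewiseIcc (-(1/2)) (1/2)
    (fun x => -48*(2*x+1)*(6*x+5)) (fun _ => 0) (fun x => -48*(2*x-1)*(6*x-5)) :=
  rfl

noncomputable def uExactDeriv : ℝ → ℝ :=
  piecewiseIcc (-(1/2)) (1/2) (fun x => -48*(x+1)*(2*x+1)^2) (fun _ => 0)
    (fun x => -48*(x-1)*(2*x-1)^2)

theorem hasDerivAt_uExact (x : ℝ) : HasDerivAt uExact (uExactDeriv x) x := by
  rw [uExact_eq_piecewiseIcc]
  exact hasDerivAt_piecewiseIcc (by norm_num)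
    (hasDerivAt_of_eq_quartic (-48) (-128) (-120) (-48) (-8) (fun y => by ring) (fun y => by ring))
    (fun y => hasDerivAt_const y (-1))
    (hasDerivAt_of_eq_quartic (-48) 128 (-120) 48 (-8) (fun y => by ring) (fun y => by ring))
    (by norm_num) (by norm_num) (by norm_num) (by norm_num) x

theorem hasDerivAt_uExactDeriv (x : ℝ) : HasDerivAt uExactDeriv (pStar x) x := by
  rw [pStar_eq_piecewiseIcc]
  exact hasDerivAt_piecewiseIcc (by norm_num)
    (hasDerivAt_of_eq_quartic 0 (-192) (-384) (-240) (-48) (fun y => by ring) (fun y => by ring))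
    (fun y => hasDerivAt_const y 0)
    (hasDerivAt_of_eq_quartic 0 (-192) 384 (-240) 48 (fun y => by ring) (fun y => by ring))
    (by norm_num) (by norm_num) (by norm_num) (by norm_num) x

theorem hasDerivAt_pStar_left_piece :
    ∀ x : ℝ, HasDerivAt (fun x => -48*(2*x+1)*(6*x+5)) (-384*(3*x+2)) x :=
  hasDerivAt_of_eq_quartic 0 0 (-576) (-768) (-240) (fun y => by ring) (fun y => by ring)

theorem hasDerivAt_pStar_right_piece :
    ∀ x : ℝ, HasDerivAt (fun x => -48*(2*x-1)*(6*x-5)) (-384*(3*x-2)) x :=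
  hasDerivAt_of_eq_quartic 0 0 (-576) 768 (-240) (fun y => by ring) (fun y => by ring)

theorem continuous_pStar : Continuous pStar := by
  rw [pStar_eq_piecewiseIcc]
  exact continuous_piecewiseIcc (by norm_num) (by fun_prop) continuous_const (by fun_prop)
    (by norm_num) (by norm_num)

theorem tendsto_deriv_pStar_nhdsLT_neg_half :
    Tendsto (deriv pStar) (𝓝[<] (-(1/2))) (𝓝 (-192)) := by
  rw [pStar_eq_piecewiseIcc]
  exact tendsto_deriv_piecewiseIcc_nhdsLT_left hasDerivAt_pStar_left_piece (by fun_prop)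
    (by norm_num)

theorem tendsto_deriv_pStar_nhdsGT_neg_half : Tendsto (deriv pStar) (𝓝[>] (-(1/2))) (𝓝 0) := by
  rw [pStar_eq_piecewiseIcc]
  exact tendsto_deriv_piecewiseIcc_nhdsGT_left (by norm_num) (fun x => hasDerivAt_const x 0)
    continuousAt_const rfl

theorem tendsto_deriv_pStar_nhdsLT_half : Tendsto (deriv pStar) (𝓝[<] (1/2)) (𝓝 0) := by
  rw [pStar_eq_piecewiseIcc]
  exact tendsto_deriv_piecewiseIcc_nhdsLT_right (by norm_num) (fun x => hasDerivAt_const x 0)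
    continuousAt_const rfl

theorem tendsto_deriv_pStar_nhdsGT_half : Tendsto (deriv pStar) (𝓝[>] (1/2)) (𝓝 192) := by
  rw [pStar_eq_piecewiseIcc]
  exact tendsto_deriv_piecewiseIcc_nhdsGT_right (by norm_num) hasDerivAt_pStar_right_piece
    (by fun_prop) (by norm_num)

theorem not_differentiableAt_pStar_neg_half : ¬ DifferentiableAt ℝ pStar (-(1/2)) := by
  rw [pStar_eq_piecewiseIcc]
  exact not_differentiableAt_piecewiseIcc_left (by norm_num) (by norm_num)
    (hasDerivAt_pStar_left_piece _) (hasDerivAt_const _ 0) (by norm_num)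

theorem not_differentiableAt_pStar_half : ¬ DifferentiableAt ℝ pStar (1/2) := by
  rw [pStar_eq_piecewiseIcc]
  exact not_differentiableAt_piecewiseIcc_right (by norm_num) (by norm_num)
    (hasDerivAt_const _ 0) (hasDerivAt_pStar_right_piece _) (by norm_num)

/-- `p* = u''` on (-1,1); `p*` is continuous on (-1,1); but its derivative has
jump discontinuities at `x = ±1/2` (one-sided limits `-192`/`0` at `-1/2` and `0`/`192` at
`1/2`), so `p*` is not differentiable at `±1/2` and `(p*)'' ∉ L²(-1,1)`, i.e. `p*` admits no
square-integrable second derivative: there is no `q ∈ L²(-1,1)` which is a pointwise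
derivative of `deriv p*` throughout `(-1,1)`. -/
theorem pStar_properties :
    (∀ x ∈ Ioo (-1 : ℝ) 1, deriv (deriv uExact) x = pStar x) ∧
    ContinuousOn pStar (Ioo (-1) 1) ∧
    Filter.Tendsto (deriv pStar) (nhdsWithin (-(1/2)) (Iio (-(1/2)))) (nhds (-192)) ∧
    Filter.Tendsto (deriv pStar) (nhdsWithin (-(1/2)) (Ioi (-(1/2)))) (nhds 0) ∧
    Filter.Tendsto (deriv pStar) (nhdsWithin (1/2) (Iio (1/2))) (nhds 0) ∧
    Filter.Tendsto (deriv pStar) (nhdsWithin (1/2) (Ioi (1/2))) (nhds 192) ∧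
    ¬ DifferentiableAt ℝ pStar (-(1/2)) ∧
    ¬ DifferentiableAt ℝ pStar (1/2) ∧
    ¬ ∃ q : ℝ → ℝ, MeasureTheory.MemLp q 2 (MeasureTheory.volume.restrict (Ioo (-1 : ℝ) 1)) ∧
        ∀ x ∈ Ioo (-1 : ℝ) 1, HasDerivAt (deriv pStar) (q x) x := by
  have hu : deriv uExact = uExactDeriv := funext fun x => (hasDerivAt_uExact x).deriv
  refine ⟨fun x _ => hu ▸ (hasDerivAt_uExactDeriv x).deriv, continuous_pStar.continuousOn,
    tendsto_deriv_pStar_nhdsLT_neg_half, tendsto_deriv_pStar_nhdsGT_neg_half,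
    tendsto_deriv_pStar_nhdsLT_half, tendsto_deriv_pStar_nhdsGT_half,
    not_differentiableAt_pStar_neg_half, not_differentiableAt_pStar_half, ?_⟩
  rintro ⟨q, -, hq⟩
  exact not_continuousAt_of_tendsto_nhdsLT_nhdsGT tendsto_deriv_pStar_nhdsLT_neg_half
    tendsto_deriv_pStar_nhdsGT_neg_half (by norm_num) (hq _ (by norm_num)).continuousAt
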